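/- arXiv:2105.03913 — 2 statements merged into one kernel-verified Lean document; each statement's English description precedes it below -/
import Mathlib

section
/- Let G be a finite group whose order equals 4p for some prime p, or equals pq for some primes p and q, and let H be a nontrivial subgroup of G. Then H is a total perfect code of G if and only if H is an (a,b)-regular set of G for every pair of integers a, b with 0 ≤ a ≤ |H|−1 and 0 ≤ b ≤ |H|. -/
open scoped Pointwise

/-- The Cayley graph of a group `G` with inverse-closed connection set `S`:
`x` and `y` are adjacent iff `x ≠ y` and `y * x⁻¹ ∈ S`. -/
def cayleyGraph {G : Type*} [Group G] (S : Set G) (hS : S = S⁻¹) : SimpleGraph G where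
  Adj x y := x ≠ y ∧ y * x⁻¹ ∈ S
  symm := by
    constructor
    rintro x y ⟨hne, hmem⟩
    refine ⟨hne.symm, ?_⟩
    rw [hS, Set.mem_inv]
    simpa using hmem
  loopless := by
    constructor
    rintro x ⟨hne, -⟩
    exact hne rfl

/-- `C` is an `(a,b)`-regular set in the graph `Γ`: `C` is a nonempty proper subset of the
vertex set, every vertex in `C` has exactly `a` neighbours in `C`, and every vertex outside
`C` has exactly `b` neighbours in `C`. -/
def IsRegularSetIn {V : Type*} (Γ : SimpleGraph V) (C : Set V) (a b : ℕ) : Prop :=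
  C.Nonempty ∧ C ≠ Set.univ ∧
    (∀ v ∈ C, {u | u ∈ C ∧ Γ.Adj v u}.ncard = a) ∧
    (∀ v ∉ C, {u | u ∈ C ∧ Γ.Adj v u}.ncard = b)

/-- `C` is an `(a,b)`-regular set of the group `G` if it is an `(a,b)`-regular set in some
Cayley graph of `G`.  A `(0,1)`-regular set of `G` is a perfect code of `G`, and a
`(1,1)`-regular set of `G` is a total perfect code of `G`. -/
def IsRegularSetOf {G : Type*} [Group G] (C : Set G) (a b : ℕ) : Prop :=
  ∃ (S : Set G) (hS : S = S⁻¹), (1 : G) ∉ S ∧ IsRegularSetIn (cayleyGraph S hS) C a b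

open scoped Pointwise

open Set

/-!
Write `S = A ∪ B` with `A = S ∩ H` and `B = S \ H`. Then `H` is an `(a,b)`-regular set of
`Cay(G,S)` exactly when `A ⊆ H \ {1}` is inverse-closed of size `a` and `B ⊆ G \ H` is
inverse-closed and meets every right coset `Hg ≠ H` in `b` points. For `(a,b) = (1,1)`,
`A = {t}` with `t` an involution of `H`, and `t` lets every size `a ≤ |H| - 1` be realised by an
inverse-closed subset of `H \ {1}`. For `B`, the values `b = 0, 1, |H| - 1, |H|` come from `∅`,
`S \ H` and their complements in `G \ H`. Any other `b` forces `|H| ≥ 4`, and the order of `G`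
then leaves two cases. If `|G : H| = 2`, then `G \ H` is a single coset and `S \ H` is an
involution in it, so any inverse-closed subset of `G \ H` of size `b` works. Otherwise `|H| = 4`,
`|G| = 4p` with `p` odd and `b = 2`, and `B` is the union of two disjoint punctured complements
of `H`: a subgroup `K` of order `p` and its conjugate `tKt`, or `K` and `tK` when `t`
normalises `K`.
-/

section

variable {G : Type*} [Group G]

theorem Set.sdiff_inv (s t : Set G) : (s \ t)⁻¹ = s⁻¹ \ t⁻¹ := preimage_sdiff _ _ _

theorem Set.exists_subset_inv_eq_self_ncard_eq {X : Set G} (hX : X.Finite) (hXinv : X⁻¹ = X)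
    {t : G} (htX : t ∈ X) (ht : t⁻¹ = t) {n : ℕ} (hn : n ≤ X.ncard) :
    ∃ A ⊆ X, A⁻¹ = A ∧ A.ncard = n := by
  induction hm : X.ncard using Nat.strong_induction_on generalizing X n with
  | _ m ih =>
  rcases (show n = m ∨ n + 1 = m ∨ n + 2 ≤ m by omega) with rfl | rfl | hle
  · exact ⟨X, subset_rfl, hXinv, hm⟩
  · refine ⟨X \ {t}, sdiff_subset, by rw [sdiff_inv, hXinv, inv_singleton, ht], ?_⟩
    rw [ncard_sdiff_singleton_of_mem htX]
    omega
  · obtain ⟨x, hxX, hxt⟩ := X.exists_ne_of_one_lt_ncard (by omega) t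
    have hYinv : (X \ {x, x⁻¹})⁻¹ = X \ {x, x⁻¹} := by
      rw [sdiff_inv, hXinv, inv_insert, inv_singleton, inv_inv, pair_comm]
    have htY : t ∈ X \ {x, x⁻¹} := by
      refine ⟨htX, ?_⟩
      rintro (rfl | h)
      · exact hxt rfl
      · exact hxt (by rw [← inv_inv x, ← (mem_singleton_iff.mp h), ht])
    have hYlt : (X \ {x, x⁻¹}).ncard < m :=
      hm ▸ ncard_lt_ncard (sdiff_ssubset_left_iff.mpr ⟨x, hxX, by simp⟩) hX
    have hYge : m - 2 ≤ (X \ {x, x⁻¹}).ncard := by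
      have := le_ncard_sdiff {x, x⁻¹} X
      have := ncard_insert_le x {x⁻¹}
      rw [ncard_singleton] at this
      omega
    obtain ⟨A, hAY, hA⟩ :=
      ih _ hYlt (hX.subset sdiff_subset) hYinv htY (n := n) (by omega) rfl
    exact ⟨A, hAY.trans sdiff_subset, hA⟩

theorem Subgroup.notMem_of_mul_mem {H : Subgroup G} {x g : G} (hg : g ∉ H) (hxg : x * g ∈ H) :
    x ∉ H :=
  fun hx => hg ((H.mul_mem_cancel_left hx).mp hxg)

theorem cayleyGraph_adj_iff {S : Set G} (hS : S = S⁻¹) (h1 : (1 : G) ∉ S) {x y : G} :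
    (cayleyGraph S hS).Adj x y ↔ y * x⁻¹ ∈ S :=
  ⟨And.right, fun h => ⟨fun hxy => h1 (by simpa [hxy] using h), h⟩⟩

theorem ncard_cayleyGraph_adj_mem_eq {S : Set G} (hS : S = S⁻¹) (h1 : (1 : G) ∉ S) (C : Set G)
    (v : G) :
    {u | u ∈ C ∧ (cayleyGraph S hS).Adj v u}.ncard = {x ∈ S | x * v ∈ C}.ncard := by
  have : {u | u ∈ C ∧ (cayleyGraph S hS).Adj v u} = (· * v) '' {x ∈ S | x * v ∈ C} := by
    ext u
    simp [cayleyGraph_adj_iff hS h1, image_mul_right, and_comm]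
  rw [this, ncard_image_of_injective _ (mul_left_injective v)]

/-- `B` is an inverse-closed subset of `G \ H` meeting every right coset `H g⁻¹ ≠ H` in exactly
`b` points. -/
def IsCosetRegular (H : Subgroup G) (B : Set G) (b : ℕ) : Prop :=
  B ⊆ (H : Set G)ᶜ ∧ B⁻¹ = B ∧ ∀ g ∉ H, {x ∈ B | x * g ∈ H}.ncard = b

theorem isRegularSetOf_subgroup_iff (H : Subgroup G) (a b : ℕ) :
    IsRegularSetOf (H : Set G) a b ↔ H ≠ ⊤ ∧
      (∃ A ⊆ (H : Set G) \ {1}, A⁻¹ = A ∧ A.ncard = a) ∧ ∃ B, IsCosetRegular H B b := by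
  constructor
  · rintro ⟨S, hS, h1, -, hne, hin, hout⟩
    refine ⟨fun hH => hne (by simp [hH]), ⟨S ∩ H, ?_, ?_, ?_⟩, S \ H, ?_, ?_, ?_⟩
    · rintro x ⟨hxS, hxH⟩
      exact ⟨hxH, fun hx1 => h1 (mem_singleton_iff.mp hx1 ▸ hxS)⟩
    · rw [inter_inv, ← hS, inv_coe_set]
    · rw [← hin 1 H.one_mem, ncard_cayleyGraph_adj_mem_eq hS h1]
      simp only [mul_one]
      rfl
    · exact fun x hx => hx.2
    · rw [sdiff_inv, ← hS, inv_coe_set]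
    · intro g hg
      rw [← hout g hg, ncard_cayleyGraph_adj_mem_eq hS h1]
      congr 1
      ext x
      rw [mem_sep_iff, mem_sep_iff, mem_sdiff]
      exact ⟨fun h => ⟨h.1.1, h.2⟩, fun h => ⟨⟨h.1, Subgroup.notMem_of_mul_mem hg h.2⟩, h.2⟩⟩
  · rintro ⟨hne, ⟨A, hAH, hAinv, hA⟩, B, hBH, hBinv, hB⟩
    have hS : A ∪ B = (A ∪ B)⁻¹ := by rw [union_inv, hAinv, hBinv]
    have h1 : (1 : G) ∉ A ∪ B := by
      rintro (h | h)
      · exact (hAH h).2 rfl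
      · exact hBH h H.one_mem
    refine ⟨A ∪ B, hS, h1, ⟨1, H.one_mem⟩, fun h => hne (by simpa using h), ?_, ?_⟩
    · intro v hv
      rw [ncard_cayleyGraph_adj_mem_eq hS h1, ← hA]
      congr 1
      ext x
      rw [mem_sep_iff, mem_union, SetLike.mem_coe, H.mul_mem_cancel_right hv]
      exact ⟨fun h => h.1.resolve_right (fun hxB => hBH hxB h.2), fun h => ⟨Or.inl h, (hAH h).1⟩⟩
    · intro v hv
      rw [ncard_cayleyGraph_adj_mem_eq hS h1, ← hB v hv]
      congr 1
      ext x
      rw [mem_sep_iff, mem_sep_iff, mem_union]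
      exact ⟨fun h => ⟨h.1.resolve_left fun hxA => Subgroup.notMem_of_mul_mem hv h.2 (hAH hxA).1,
        h.2⟩, fun h => ⟨Or.inr h.1, h.2⟩⟩

theorem Subgroup.ncard_setOf_mul_mem (H : Subgroup G) (g : G) :
    {x : G | x * g ∈ H}.ncard = Nat.card H := by
  rw [show {x : G | x * g ∈ H} = (· * g) ⁻¹' H from rfl, ← image_mul_right',
    ncard_image_of_injective _ (mul_left_injective _), ← Nat.card_coe_set_eq,
    SetLike.coe_sort_coe]

theorem Subgroup.sep_mul_mem_eq_self_of_index_eq_two {H : Subgroup G} (hH : H.index = 2)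
    {B : Set G} (hB : B ⊆ (H : Set G)ᶜ) {g : G} (hg : g ∉ H) : {x ∈ B | x * g ∈ H} = B :=
  sep_eq_self_iff_mem_true.mpr fun _ hx =>
    (H.mul_mem_iff_of_index_two hH).mpr (iff_of_false (hB hx) hg)

theorem Subgroup.disjoint_of_card_eq_prime {K L : Subgroup G} {p : ℕ} (hp : p.Prime)
    (hK : Nat.card K = p) (hL : Nat.card L = p) (hKL : K ≠ L) : Disjoint K L := by
  have := Nat.finite_of_card_ne_zero (hK ▸ hp.ne_zero)
  have := Nat.finite_of_card_ne_zero (hL ▸ hp.ne_zero)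
  rcases hp.eq_one_or_self_of_dvd _ (hK ▸ Subgroup.card_dvd_of_le (inf_le_left : K ⊓ L ≤ K))
    with h | h
  · exact disjoint_iff.mpr (Subgroup.card_eq_one.mp h)
  · have hKinf := Subgroup.eq_of_le_of_card_ge (inf_le_left : K ⊓ L ≤ K) (by rw [hK, h])
    have hLinf := Subgroup.eq_of_le_of_card_ge (inf_le_right : K ⊓ L ≤ L) (by rw [hL, h])
    exact absurd (hKinf.symm.trans hLinf) hKL

namespace IsCosetRegular

variable {H : Subgroup G} {B B' : Set G} {b b' : ℕ}

theorem empty : IsCosetRegular H ∅ 0 :=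
  ⟨empty_subset _, inv_empty, fun _ _ => by simp⟩

theorem union [Finite G] (hB : IsCosetRegular H B b) (hB' : IsCosetRegular H B' b')
    (hd : Disjoint B B') : IsCosetRegular H (B ∪ B') (b + b') := by
  refine ⟨union_subset hB.1 hB'.1, by rw [union_inv, hB.2.1, hB'.2.1], fun g hg => ?_⟩
  rw [show {x ∈ B ∪ B' | x * g ∈ H} = _ from sep_union,
    ncard_union_eq (hd.mono (sep_subset _ _) (sep_subset _ _)), hB.2.2 g hg, hB'.2.2 g hg]

theorem compl_sdiff [Finite G] (hB : IsCosetRegular H B b) :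
    IsCosetRegular H ((H : Set G)ᶜ \ B) (Nat.card H - b) := by
  refine ⟨sdiff_subset, by rw [sdiff_inv, compl_inv, inv_coe_set, hB.2.1], fun g hg => ?_⟩
  have : {x ∈ (H : Set G)ᶜ \ B | x * g ∈ H} = {x | x * g ∈ H} \ {x ∈ B | x * g ∈ H} := by
    ext x
    rw [mem_sep_iff, mem_sdiff, mem_sdiff, mem_sep_iff, mem_compl_iff, SetLike.mem_coe]
    exact ⟨fun h => ⟨h.2, fun h' => h.1.2 h'.1⟩,
      fun h => ⟨⟨Subgroup.notMem_of_mul_mem hg h.1, fun hxB => h.2 ⟨hxB, h.1⟩⟩, h.1⟩⟩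
  rw [this, ncard_sdiff (fun x hx => hx.2), H.ncard_setOf_mul_mem, hB.2.2 g hg]

theorem smul_of_inv_eq_self (hB : IsCosetRegular H B b) {t : G} (htH : t ∈ H) (ht : t⁻¹ = t)
    (hconj : ∀ x ∈ B, t * x * t ∈ B) : IsCosetRegular H (t • B) b := by
  refine ⟨?_, ?_, fun g hg => ?_⟩
  · rintro _ ⟨x, hx, rfl⟩ hxH
    exact hB.1 hx ((H.mul_mem_cancel_left htH).mp hxH)
  · have hsub : (t • B)⁻¹ ⊆ t • B := by
      rintro y hy
      obtain ⟨x, hx, hxy⟩ := mem_smul_set.mp (mem_inv.mp hy)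
      refine mem_smul_set.mpr ⟨t * x⁻¹ * t, hconj _ (hB.2.1 ▸ inv_mem_inv.mpr hx), ?_⟩
      rw [← inv_inv y, ← hxy, smul_eq_mul, smul_eq_mul, mul_inv_rev, ← mul_assoc, ← mul_assoc]
      nth_rewrite 1 [← ht]
      rw [inv_mul_cancel, one_mul, ht]
    exact hsub.antisymm (inv_subset.mp hsub)
  · have : {y ∈ t • B | y * g ∈ H} = t • {x ∈ B | x * g ∈ H} := by
      ext y
      rw [mem_sep_iff, mem_smul_set_iff_inv_smul_mem, mem_smul_set_iff_inv_smul_mem, mem_sep_iff,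
        smul_eq_mul, mul_assoc, H.mul_mem_cancel_left (H.inv_mem htH)]
    rw [this, ncard_smul_set, hB.2.2 g hg]

end IsCosetRegular

theorem isCosetRegular_ncard_of_index_eq_two {H : Subgroup G} (hH : H.index = 2) {B : Set G}
    (hB : B ⊆ (H : Set G)ᶜ) (hBinv : B⁻¹ = B) : IsCosetRegular H B B.ncard :=
  ⟨hB, hBinv, fun _ hg => by rw [Subgroup.sep_mul_mem_eq_self_of_index_eq_two hH hB hg]⟩

theorem IsCosetRegular.ncard_eq_of_index_eq_two {H : Subgroup G} {B : Set G} {b : ℕ}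
    (hB : IsCosetRegular H B b) (hH : H.index = 2) : B.ncard = b := by
  obtain ⟨g, hg⟩ := SetLike.exists_not_mem_of_ne_top H
    (fun h => by simp [h, Subgroup.index_top] at hH)
  rw [← hB.2.2 g hg, Subgroup.sep_mul_mem_eq_self_of_index_eq_two hH hB.1 hg]

theorem isCosetRegular_sdiff_one_of_isComplement' {H K : Subgroup G} (hK : K.IsComplement' H) :
    IsCosetRegular H ((K : Set G) \ {1}) 1 := by
  refine ⟨fun x hx hxH => hx.2 (Subgroup.disjoint_def.mp hK.disjoint hx.1 hxH),
    by rw [sdiff_inv, inv_coe_set, inv_singleton, inv_one], fun g hg => ?_⟩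
  obtain ⟨k, hk, huniq⟩ := Subgroup.isComplement_iff_existsUnique_inv_mul_mem.mp hK g
  refine ncard_eq_one.mpr ⟨(k : G)⁻¹, ?_⟩
  ext x
  rw [mem_sep_iff, mem_sdiff, mem_singleton_iff, mem_singleton_iff, SetLike.mem_coe]
  constructor
  · rintro ⟨⟨hxK, -⟩, hxg⟩
    rw [← huniq ⟨x⁻¹, K.inv_mem hxK⟩ (by simpa using hxg), inv_inv]
  · rintro rfl
    exact ⟨⟨K.inv_mem k.2, fun h => hg (by simpa [inv_eq_one.mp h] using hk)⟩, hk⟩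

theorem Nat.eq_two_mul_or_eq_four_of_even_dvd {m n : ℕ}
    (hm : (∃ p : ℕ, p.Prime ∧ m = 4 * p) ∨ ∃ p q : ℕ, p.Prime ∧ q.Prime ∧ m = p * q)
    (hn : n ∣ m) (h2 : 2 ∣ n) (h4 : 4 ≤ n) (hne : n ≠ m) :
    m = 2 * n ∨ n = 4 ∧ ∃ p : ℕ, p.Prime ∧ p ≠ 2 ∧ m = 4 * p := by
  rcases hm with ⟨p, hp, rfl⟩ | ⟨p, q, hp, hq, rfl⟩
  · obtain ⟨y, z, hy, hz, rfl⟩ := Nat.dvd_mul.mp hn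
    have hy4 : y ≤ 4 := Nat.le_of_dvd (by norm_num) hy
    rcases hp.eq_two_or_odd with hp2 | hp2 <;>
      rcases (Nat.dvd_prime hp).mp hz with rfl | rfl <;>
      interval_cases y <;> first | omega | exact Or.inr ⟨rfl, p, hp, by omega, rfl⟩
  · exfalso
    obtain ⟨y, z, hy, hz, rfl⟩ := Nat.dvd_mul.mp hn
    rcases hp.eq_two_or_odd with hp2 | hp2 <;> rcases hq.eq_two_or_odd with hq2 | hq2 <;>
      rcases (Nat.dvd_prime hp).mp hy with rfl | rfl <;>
      rcases (Nat.dvd_prime hq).mp hz with rfl | rfl <;> omega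

theorem exists_isCosetRegular_two [Finite G] {H : Subgroup G} {p : ℕ} (hp : p.Prime)
    (hpH : ¬ p ∣ Nat.card H) (hG : Nat.card G = p * Nat.card H) {t : G} (htH : t ∈ H)
    (ht1 : t ≠ 1) (ht : t⁻¹ = t) : ∃ B, IsCosetRegular H B 2 := by
  have : Fact p.Prime := ⟨hp⟩
  have hcompl (L : Subgroup G) (hL : Nat.card L = p) :
      IsCosetRegular H ((L : Set G) \ {1}) 1 :=
    isCosetRegular_sdiff_one_of_isComplement' <| Subgroup.isComplement'_of_coprime
      (by rw [hL, hG]) (hL ▸ (Nat.Prime.coprime_iff_not_dvd hp).mpr hpH)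
  obtain ⟨g, hg⟩ := exists_prime_orderOf_dvd_card' p (hG ▸ dvd_mul_right p _)
  set K := Subgroup.zpowers g
  have hK : Nat.card K = p := by rw [Nat.card_zpowers, hg]
  set K' := K.map (MulAut.conj t).toMonoidHom
  have hK' : Nat.card K' = p := by
    rw [Subgroup.card_map_of_injective (MulAut.conj t).injective, hK]
  by_cases hKK' : K' = K
  · have hconj : ∀ x ∈ (K : Set G) \ {1}, t * x * t ∈ (K : Set G) \ {1} := by
      rintro x ⟨hxK, hx1⟩
      refine ⟨?_, ?_⟩
      · have : (MulAut.conj t).toMonoidHom x ∈ K' := Subgroup.mem_map_of_mem _ hxK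
        rw [hKK'] at this
        simpa [MulAut.conj_apply, ht] using this
      · rw [mem_singleton_iff]
        nth_rewrite 2 [← ht]
        rwa [conj_eq_one_iff]
    refine ⟨_, (hcompl K hK).union ((hcompl K hK).smul_of_inv_eq_self htH ht hconj) ?_⟩
    rw [disjoint_left]
    rintro _ ⟨hxK, -⟩ ⟨y, ⟨hyK, hy1⟩, rfl⟩
    have htK : t ∈ K := by simpa using K.mul_mem hxK (K.inv_mem hyK)
    exact (hcompl K hK).1 ⟨htK, ht1⟩ htH
  · refine ⟨_, (hcompl K hK).union (hcompl K' hK') ?_⟩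
    rw [disjoint_left]
    rintro x ⟨hxK, hx1⟩ ⟨hxK', -⟩
    exact hx1 (Subgroup.disjoint_def.mp
      (Subgroup.disjoint_of_card_eq_prime hp hK hK' (Ne.symm hKK')) hxK hxK')

theorem exists_isCosetRegular [Finite G] {H : Subgroup G}
    (hG : (∃ p : ℕ, p.Prime ∧ Nat.card G = 4 * p) ∨
      ∃ p q : ℕ, p.Prime ∧ q.Prime ∧ Nat.card G = p * q)
    (hH : H ≠ ⊤) {t : G} (htH : t ∈ H) (ht1 : t ≠ 1) (ht : t⁻¹ = t) {B₁ : Set G}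
    (hB₁ : IsCosetRegular H B₁ 1) {b : ℕ} (hb : b ≤ Nat.card H) : ∃ B, IsCosetRegular H B b := by
  have hcompl : IsCosetRegular H (H : Set G)ᶜ (Nat.card H) := by
    simpa using IsCosetRegular.empty.compl_sdiff (H := H)
  by_cases hb0 : b = 0
  · exact ⟨∅, hb0 ▸ .empty⟩
  by_cases hb1 : b = 1
  · exact ⟨B₁, hb1 ▸ hB₁⟩
  by_cases hbH : b = Nat.card H
  · exact ⟨_, hbH ▸ hcompl⟩
  by_cases hbH1 : b = Nat.card H - 1
  · exact ⟨_, hbH1 ▸ hB₁.compl_sdiff⟩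
  have : Fact (2 : ℕ).Prime := ⟨Nat.prime_two⟩
  have h2 : 2 ∣ Nat.card H :=
    orderOf_eq_prime (by rw [sq, ← mul_inv_cancel t, ht]) ht1 ▸ H.orderOf_dvd_natCard htH
  have hne : Nat.card H ≠ Nat.card G := fun h => hH (Subgroup.eq_top_of_card_eq H h)
  rcases Nat.eq_two_mul_or_eq_four_of_even_dvd hG H.card_subgroup_dvd_card h2 (by omega) hne
    with hG2 | ⟨hH4, p, hp, hp2, hGp⟩
  · have hidx : H.index = 2 :=
      Nat.eq_of_mul_eq_mul_right Nat.card_pos (H.index_mul_card.trans hG2)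
    -- in index two, `B₁` is a single involution outside `H`
    obtain ⟨w, rfl⟩ := ncard_eq_one.mp (hB₁.ncard_eq_of_index_eq_two hidx)
    have hw : w⁻¹ = w := by simpa using hB₁.2.1
    obtain ⟨B, hBsub, hBinv, hBcard⟩ := exists_subset_inv_eq_self_ncard_eq (toFinite _)
      hcompl.2.1 (hB₁.1 rfl) hw (hcompl.ncard_eq_of_index_eq_two hidx ▸ hb)
    exact ⟨B, hBcard ▸ isCosetRegular_ncard_of_index_eq_two hidx hBsub hBinv⟩
  · obtain rfl : b = 2 := by omega
    have hpH : ¬ p ∣ Nat.card H := fun h =>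
      hp2 ((Nat.prime_dvd_prime_iff_eq hp Nat.prime_two).mp
        (hp.dvd_of_dvd_pow (n := 2) (by rwa [hH4] at h)))
    exact exists_isCosetRegular_two hp hpH (by rw [hGp, hH4, mul_comm]) htH ht1 ht

end

theorem statement_5 {G : Type*} [Group G] [Fintype G]
    (hG : (∃ p : ℕ, p.Prime ∧ Nat.card G = 4 * p) ∨
      (∃ p q : ℕ, p.Prime ∧ q.Prime ∧ Nat.card G = p * q))
    (H : Subgroup G) (hH : H ≠ ⊥) :
    IsRegularSetOf (H : Set G) 1 1 ↔
      ∀ a b : ℕ, a ≤ Nat.card H - 1 → b ≤ Nat.card H →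
        IsRegularSetOf (H : Set G) a b := by
  refine ⟨fun h a b ha hb => ?_, fun h => ?_⟩
  · obtain ⟨hHtop, ⟨A₁, hA₁H, hA₁inv, hA₁⟩, B₁, hB₁⟩ := (isRegularSetOf_subgroup_iff H 1 1).mp h
    obtain ⟨t, rfl⟩ := ncard_eq_one.mp hA₁
    obtain ⟨htH, ht1⟩ := hA₁H rfl
    have ht : t⁻¹ = t := by simpa using hA₁inv
    have hA : ((H : Set G) \ {1}).ncard = Nat.card H - 1 := by
      rw [ncard_sdiff_singleton_of_mem H.one_mem, ← Nat.card_coe_set_eq, SetLike.coe_sort_coe]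
    refine (isRegularSetOf_subgroup_iff H a b).mpr
      ⟨hHtop, ?_, exists_isCosetRegular hG hHtop htH ht1 ht hB₁ hb⟩
    exact exists_subset_inv_eq_self_ncard_eq (X := (H : Set G) \ {1}) (toFinite _)
      (by rw [sdiff_inv, inv_coe_set, inv_singleton, inv_one]) ⟨htH, ht1⟩ ht (hA ▸ ha)
  · have := (Subgroup.one_lt_card_iff_ne_bot H).mpr hH
    exact h 1 1 (by omega) (by omega)
end

section
/- Let G be a finite group of order 4p, where p is a prime, let H be a nontrivial subgroup of G, and let x ∈ G∖H be such that HxH = Hx⁻¹H. Suppose that HxH contains an involution whenever |HxH|/|H| is odd. Then for any integer b with 0 ≤ b ≤ |H|, there exist b pairwise disjoint right transversals of H in HxH whose union is inverse-closed. -/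
open scoped Pointwise

/-- The double coset `HxH = {h₁ * x * h₂ : h₁, h₂ ∈ H}`. -/
def doubleCoset {G : Type*} [Group G] (H : Subgroup G) (x : G) : Set G :=
  (H : Set G) * {x} * (H : Set G)

/-- For a subset `K` of `G` that is a union of right cosets of `H`, a right transversal of
`H` in `K` is a subset `T` of `K` containing exactly one element from each right coset of
`H` contained in `K`. -/
def IsRightTransversalIn {G : Type*} [Group G] (H : Subgroup G) (K T : Set G) : Prop :=
  T ⊆ K ∧ ∀ x ∈ K, ∃! t, t ∈ T ∧ t * x⁻¹ ∈ H

/-!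
Let `K = HxH`. It is inverse-closed, and it is the disjoint union of `k` right cosets of `H`,
labelled by `ZMod k`. Cutting `K` into the cells `Hg ∩ (Hg')⁻¹` gives a `k × k` grid of cells
of one common size `m` (translate by elements of `H`), so `|H| = k m`, and inversion maps cell
`(i, j)` onto cell `(j, i)`. It suffices to find an inverse-closed `S ⊆ K` meeting every right
coset in exactly `b` elements: numbering the elements of each `S ∩ Hg` by `Fin b` then yields the
`b` transversals. Take `S` circulant, with `c (i - j)` elements in cell `(i, j)`, where
`c : ZMod k → ℕ` is symmetric (`c (-d) = c d`), bounded by `m` and of total `b`; the part in cell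
`(j, i)` is the inverse of the part in cell `(i, j)`, and on the diagonal an inverse-closed set of
odd size `c 0` needs an involution. Such a `c` counts the fibres of an inverse-closed `b`-subset of
`ZMod k × Fin m` under `(d, t) ↦ (-d, t)`. When `K` has no involution, `k` is even by hypothesis,
`m` is even because inversion pairs off a diagonal cell, and twisting the involution by `Fin.rev`
on the fibre over `0` makes `c 0` even.
-/

open Finset Function

namespace Finset

variable {α : Type*} [DecidableEq α] {f : α → α}

theorem even_card_of_involutive (hf : Involutive f) {A : Finset α} (hA : ∀ a ∈ A, f a ∈ A)
    (hfix : ∀ a ∈ A, f a ≠ a) : Even #A := by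
  let g : Function.End A := fun a => ⟨f a, hA a a.2⟩
  have hg : g ^ 2 ^ 1 = 1 := funext fun a => Subtype.ext (hf a)
  have := Equiv.Perm.card_fixedPoints_modEq (p := 2) hg
  have hempty : Fintype.card (Function.fixedPoints g) = 0 :=
    Fintype.card_eq_zero_iff.mpr ⟨fun ⟨a, ha⟩ => hfix a a.2 (congrArg Subtype.val ha)⟩
  rw [hempty, Fintype.card_coe] at this
  exact Nat.even_iff.mpr this

theorem sdiff_pair_invClosed (hf : Involutive f) {A : Finset α} (hA : ∀ a ∈ A, f a ∈ A) (a : α) :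
    ∀ b ∈ A \ {a, f a}, f b ∈ A \ {a, f a} := by
  intro b hb
  simp only [mem_sdiff, mem_insert, mem_singleton, not_or] at hb ⊢
  exact ⟨hA b hb.1, fun h => hb.2.2 (by rw [← h, hf]), fun h => hb.2.1 (hf.injective h)⟩

theorem exists_invClosed_subset_card_eq_of_even (hf : Involutive f) {A : Finset α}
    (hA : ∀ a ∈ A, f a ∈ A) {s : ℕ} (hs : s ≤ #A) (heven : Even s) :
    ∃ S ⊆ A, (∀ a ∈ S, f a ∈ S) ∧ #S = s := by
  obtain ⟨t, rfl⟩ := heven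
  induction t generalizing A with
  | zero => exact ⟨∅, empty_subset _, by simp, rfl⟩
  | succ t ih =>
    by_cases hmov : ∃ a ∈ A, f a ≠ a
    · obtain ⟨a, ha, hfa⟩ := hmov
      have hpair : {a, f a} ⊆ A := by simp [insert_subset_iff, ha, hA a ha]
      have hcard : #({a, f a} : Finset α) = 2 := card_pair hfa.symm
      obtain ⟨S, hSA, hS, hcardS⟩ := ih (sdiff_pair_invClosed hf hA a)
        (by rw [card_sdiff_of_subset hpair, hcard]; omega)
      refine ⟨S ∪ {a, f a}, union_subset (hSA.trans sdiff_subset) hpair, ?_, ?_⟩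
      · simp only [mem_union, mem_insert, mem_singleton]
        rintro b (hb | rfl | rfl)
        · exact Or.inl (hS b hb)
        · exact Or.inr (Or.inr rfl)
        · exact Or.inr (Or.inl (hf a))
      · rw [card_union_of_disjoint (disjoint_of_subset_left hSA sdiff_disjoint), hcardS, hcard]
        omega
    · push Not at hmov
      obtain ⟨S, hSA, hcardS⟩ := exists_subset_card_eq hs
      exact ⟨S, hSA, fun a ha => (hmov a (hSA ha)).symm ▸ ha, hcardS⟩

theorem exists_invClosed_subset_card_eq (hf : Involutive f) {A : Finset α}
    (hA : ∀ a ∈ A, f a ∈ A) {s : ℕ} (hs : s ≤ #A) (hpar : Even s ∨ ∃ a ∈ A, f a = a) :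
    ∃ S ⊆ A, (∀ a ∈ S, f a ∈ S) ∧ #S = s := by
  by_cases heven : Even s
  · exact exists_invClosed_subset_card_eq_of_even hf hA hs heven
  obtain ⟨a, ha, hfa⟩ := hpar.resolve_left heven
  have hs1 : 1 ≤ s := Nat.one_le_iff_ne_zero.mpr (by rintro rfl; exact heven ⟨0, rfl⟩)
  have hA' : ∀ b ∈ A.erase a, f b ∈ A.erase a := fun b hb =>
    mem_erase.mpr ⟨fun h => (mem_erase.mp hb).1 (by rw [← hf b, h, hfa]),
      hA b (mem_of_mem_erase hb)⟩
  obtain ⟨S, hSA, hS, hcardS⟩ := exists_invClosed_subset_card_eq_of_even hf hA' (s := s - 1)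
    (by rw [card_erase_of_mem ha]; omega) (by rw [Nat.even_sub hs1]; simpa using heven)
  have haS : a ∉ S := fun h => (mem_erase.mp (hSA h)).1 rfl
  refine ⟨insert a S, insert_subset ha (hSA.trans (erase_subset a A)), ?_, ?_⟩
  · simp only [mem_insert]
    rintro b (rfl | hb)
    · exact Or.inl hfa
    · exact Or.inr (hS b hb)
  · rw [card_insert_of_notMem haS, hcardS]; omega

end Finset

section Distribution

variable {k m : ℕ}

def negSwap (τ : Fin m → Fin m) (p : ZMod k × Fin m) : ZMod k × Fin m :=
  (-p.1, if p.1 = 0 then τ p.2 else p.2)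

theorem negSwap_involutive {τ : Fin m → Fin m} (hτ : Involutive τ) :
    Involutive (negSwap (k := k) τ) := by
  rintro ⟨d, t⟩
  by_cases hd : d = 0 <;> simp [negSwap, hd, hτ t]

variable [NeZero k]

theorem exists_symmetric_distribution_of_involutive {τ : Fin m → Fin m} (hτ : Involutive τ)
    {b : ℕ} (hb : b ≤ k * m) (hpar : Even b ∨ ∃ p : ZMod k × Fin m, negSwap τ p = p) :
    ∃ c : ZMod k → ℕ, (∀ d, c (-d) = c d) ∧ (∀ d, c d ≤ m) ∧ ∑ d, c d = b ∧
      ((∀ t, τ t ≠ t) → Even (c 0)) := by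
  classical
  obtain ⟨T, -, hT, hTcard⟩ := exists_invClosed_subset_card_eq (negSwap_involutive (k := k) hτ)
    (A := univ) (s := b) (fun _ _ => mem_univ _) (by simpa [ZMod.card] using hb)
    (by simpa using hpar)
  refine ⟨fun d => #{p ∈ T | p.1 = d}, fun d => ?_, fun d => ?_, ?_, fun hτfix => ?_⟩
  · refine card_nbij' (negSwap τ) (negSwap τ) ?_ ?_ (fun p _ => negSwap_involutive hτ p)
      (fun p _ => negSwap_involutive hτ p) <;>
    · intro p hp
      simp only [mem_coe, mem_filter] at hp ⊢
      exact ⟨hT p hp.1, by simp [negSwap, hp.2]⟩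
  · calc #{p ∈ T | p.1 = d} ≤ #(univ : Finset (Fin m)) :=
          card_le_card_of_injOn Prod.snd (fun _ _ => mem_univ _) (fun p hp q hq h =>
            Prod.ext ((mem_filter.mp hp).2.trans (mem_filter.mp hq).2.symm) h)
      _ = m := by simp
  · rw [← hTcard, card_eq_sum_card_fiberwise (fun p _ => mem_univ p.1)]
  · refine even_card_of_involutive (negSwap_involutive hτ) (fun p hp => ?_) (fun p hp => ?_)
    · rw [mem_filter] at hp ⊢
      exact ⟨hT p hp.1, by simp [negSwap, hp.2]⟩
    · obtain ⟨d, t⟩ := p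
      obtain rfl : d = 0 := (mem_filter.mp hp).2
      simpa [negSwap] using hτfix t

theorem exists_symmetric_distribution {b : ℕ} (hb : b ≤ k * m) :
    ∃ c : ZMod k → ℕ, (∀ d, c (-d) = c d) ∧ (∀ d, c d ≤ m) ∧ ∑ d, c d = b := by
  refine (exists_symmetric_distribution_of_involutive (τ := id) (fun _ => rfl) hb ?_).imp
    fun c hc => ⟨hc.1, hc.2.1, hc.2.2.1⟩
  refine (Nat.even_or_odd b).imp_right fun hodd => ?_
  have hm : 0 < m := Nat.pos_of_mul_pos_left (hodd.pos.trans_le hb)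
  exact ⟨(0, ⟨0, hm⟩), by simp [negSwap]⟩

theorem exists_symmetric_distribution_of_even (hk : Even k) (hm : Even m) {b : ℕ}
    (hb : b ≤ k * m) :
    ∃ c : ZMod k → ℕ, (∀ d, c (-d) = c d) ∧ (∀ d, c d ≤ m) ∧ ∑ d, c d = b ∧ Even (c 0) := by
  have hrev : ∀ t : Fin m, Fin.rev t ≠ t := fun t h => by
    have := congrArg Fin.val h
    rw [Fin.val_rev] at this
    obtain ⟨r, hr⟩ := hm
    omega
  refine (exists_symmetric_distribution_of_involutive Fin.rev_involutive hb ?_).imp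
    fun c hc => ⟨hc.1, hc.2.1, hc.2.2.1, hc.2.2.2 hrev⟩
  refine (Nat.even_or_odd b).imp_right fun hodd => ?_
  have hm : 0 < m := Nat.pos_of_mul_pos_left (hodd.pos.trans_le hb)
  have hk0 : 0 < k := Nat.pos_of_ne_zero (NeZero.ne k)
  obtain ⟨r, rfl⟩ := hk
  have hval : ((r : ℕ) : ZMod (r + r)).val = r := ZMod.val_cast_of_lt (by omega)
  have hneg : -((r : ℕ) : ZMod (r + r)) = r := (ZMod.neg_eq_self_iff _).mpr (Or.inr (by omega))
  have hne : ((r : ℕ) : ZMod (r + r)) ≠ 0 := fun h => by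
    rw [h, ZMod.val_zero] at hval; omega
  exact ⟨(r, ⟨0, hm⟩), by simp [negSwap, hneg, hne]⟩

end Distribution

section Cells

variable {α : Type*} {k : ℕ} {K S : Finset α} {ι : α → α} {u : α → ZMod k}

def cell (K : Finset α) (ι : α → α) (u : α → ZMod k) (i j : ZMod k) : Finset α :=
  {a ∈ K | u a = i ∧ u (ι a) = j}

theorem mem_cell {a : α} {i j : ZMod k} : a ∈ cell K ι u i j ↔ a ∈ K ∧ u a = i ∧ u (ι a) = j :=
  mem_filter

theorem cell_subset (i j : ZMod k) : cell K ι u i j ⊆ K :=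
  filter_subset _ K

theorem map_mem_cell (hι : Involutive ι) (hK : ∀ a ∈ K, ι a ∈ K) {a : α} {i j : ZMod k}
    (ha : a ∈ cell K ι u i j) : ι a ∈ cell K ι u j i := by
  obtain ⟨haK, hi, hj⟩ := mem_cell.mp ha
  exact mem_cell.mpr ⟨hK a haK, hj, by rw [hι a, hi]⟩

variable [DecidableEq α] [NeZero k]

theorem card_filter_eq_sum_card_inter_cell (hSK : S ⊆ K) (i : ZMod k) :
    #{a ∈ S | u a = i} = ∑ j, #(S ∩ cell K ι u i j) := by
  rw [card_eq_sum_card_fiberwise (f := u ∘ ι) (fun _ _ => mem_univ _)]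
  refine sum_congr rfl fun j _ => congrArg card (ext fun a => ?_)
  simp only [mem_filter, mem_inter, mem_cell, comp_apply]
  exact ⟨fun h => ⟨h.1.1, hSK h.1.1, h.1.2, h.2⟩, fun h => ⟨⟨h.1, h.2.2.1⟩, h.2.2.2⟩⟩

theorem card_filter_eq_mul {m : ℕ} (hcell : ∀ i j, #(cell K ι u i j) = m) (i : ZMod k) :
    #{a ∈ K | u a = i} = k * m := by
  rw [card_filter_eq_sum_card_inter_cell (ι := ι) subset_rfl]
  simp [inter_eq_right.mpr (cell_subset _ _), hcell, ZMod.card]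

theorem exists_invClosed_subset_card_inter_cell (hι : Involutive ι) (hK : ∀ a ∈ K, ι a ∈ K)
    (c : ZMod k → ℕ) (hc : ∀ d, c (-d) = c d) (hcle : ∀ i j, c (i - j) ≤ #(cell K ι u i j))
    (hdiag : ∀ i, Even (c 0) ∨ ∃ a ∈ cell K ι u i i, ι a = a) :
    ∃ S ⊆ K, (∀ a ∈ S, ι a ∈ S) ∧ ∀ i j, #(S ∩ cell K ι u i j) = c (i - j) := by
  have hpiece : ∀ i j, ∃ P ⊆ cell K ι u i j, #P = c (i - j) ∧ (i = j → ∀ a ∈ P, ι a ∈ P) := by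
    intro i j
    by_cases hij : i = j
    · subst hij
      obtain ⟨P, hP, hPι, hPc⟩ := exists_invClosed_subset_card_eq hι
        (fun a ha => map_mem_cell hι hK ha) (hcle i i) (by rw [sub_self]; exact hdiag i)
      exact ⟨P, hP, hPc, fun _ => hPι⟩
    · obtain ⟨P, hP, hPc⟩ := exists_subset_card_eq (hcle i j)
      exact ⟨P, hP, hPc, fun h => absurd h hij⟩
  choose P hPsub hPcard hPι using hpiece
  let Q i j := if i.val ≤ j.val then P i j else (P j i).image ι
  have hQsub : ∀ i j, Q i j ⊆ cell K ι u i j := by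
    intro i j
    by_cases hij : i.val ≤ j.val
    · simpa [Q, hij] using hPsub i j
    · simp only [Q, hij, if_false, image_subset_iff]
      exact fun a ha => map_mem_cell hι hK (hPsub j i ha)
  have hQcard : ∀ i j, #(Q i j) = c (i - j) := by
    intro i j
    by_cases hij : i.val ≤ j.val
    · simpa [Q, hij] using hPcard i j
    · simp only [Q, hij, if_false]
      rw [card_image_of_injective _ hι.injective, hPcard, ← hc, neg_sub]
  have hQι : ∀ i j, ∀ a ∈ Q i j, ι a ∈ Q j i := by
    intro i j a ha
    rcases lt_trichotomy i.val j.val with hij | hij | hij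
    · simp only [Q, hij.le, if_true, not_le.mpr hij, if_false] at ha ⊢
      exact mem_image_of_mem ι ha
    · obtain rfl : i = j := ZMod.val_injective k hij
      simp only [Q, le_refl, if_true] at ha ⊢
      exact hPι i i rfl a ha
    · simp only [Q, hij.le, if_true, not_le.mpr hij, if_false] at ha ⊢
      obtain ⟨b, hb, rfl⟩ := mem_image.mp ha
      rwa [hι b]
  refine ⟨univ.biUnion fun p : ZMod k × ZMod k => Q p.1 p.2, ?_, ?_, fun i j => ?_⟩
  · exact biUnion_subset.mpr fun p _ => (hQsub p.1 p.2).trans (cell_subset _ _)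
  · simp only [mem_biUnion, mem_univ, true_and]
    exact fun a ⟨p, hp⟩ => ⟨(p.2, p.1), hQι p.1 p.2 a hp⟩
  · rw [← hQcard]
    congr 1
    ext a
    simp only [mem_inter, mem_biUnion, mem_univ, true_and]
    refine ⟨fun ⟨⟨p, hp⟩, ha⟩ => ?_, fun ha => ⟨⟨(i, j), ha⟩, hQsub i j ha⟩⟩
    obtain ⟨-, hp1, hp2⟩ := mem_cell.mp (hQsub p.1 p.2 hp)
    obtain ⟨-, hi, hj⟩ := mem_cell.mp ha
    rwa [← hi, ← hj, hp1, hp2]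

theorem exists_invClosed_subset_card_filter_eq (hι : Involutive ι) (hK : ∀ a ∈ K, ι a ∈ K)
    {m : ℕ} (hcell : ∀ i j, #(cell K ι u i j) = m)
    (hdiag : (∃ a ∈ K, ι a = a) → ∀ i, ∃ a ∈ cell K ι u i i, ι a = a)
    (hk : (∀ a ∈ K, ι a ≠ a) → Even k) {b : ℕ} (hb : b ≤ k * m) :
    ∃ S ⊆ K, (∀ a ∈ S, ι a ∈ S) ∧ ∀ i, #{a ∈ S | u a = i} = b := by
  obtain ⟨c, hc, hcm, hcsum, hc0⟩ : ∃ c : ZMod k → ℕ, (∀ d, c (-d) = c d) ∧ (∀ d, c d ≤ m) ∧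
      ∑ d, c d = b ∧ ∀ i, Even (c 0) ∨ ∃ a ∈ cell K ι u i i, ι a = a := by
    by_cases hfix : ∃ a ∈ K, ι a = a
    · obtain ⟨c, hc, hcm, hcsum⟩ := exists_symmetric_distribution hb
      exact ⟨c, hc, hcm, hcsum, fun i => Or.inr (hdiag hfix i)⟩
    · push Not at hfix
      have hm : Even m := hcell 0 0 ▸ even_card_of_involutive hι
        (fun a ha => map_mem_cell hι hK ha) (fun a ha => hfix a (mem_cell.mp ha).1)
      obtain ⟨c, hc, hcm, hcsum, hc0⟩ := exists_symmetric_distribution_of_even (hk hfix) hm hb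
      exact ⟨c, hc, hcm, hcsum, fun _ => Or.inl hc0⟩
  obtain ⟨S, hSK, hSι, hScell⟩ :=
    exists_invClosed_subset_card_inter_cell hι hK c hc (fun i j => hcell i j ▸ hcm _) hc0
  refine ⟨S, hSK, hSι, fun i => ?_⟩
  rw [card_filter_eq_sum_card_inter_cell hSK, ← hcsum, ← (Equiv.subLeft i).sum_comp c]
  exact sum_congr rfl fun j _ => hScell i j

end Cells

theorem Finset.exists_disjoint_sections {α β : Type*} [DecidableEq α] [Fintype β] [DecidableEq β]
    (S : Finset α) (r : α → β) {b : ℕ} (hS : ∀ j, #{a ∈ S | r a = j} = b) :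
    ∃ R : Fin b → Finset α, (∀ i j, ∃! a, a ∈ R i ∧ r a = j) ∧
      (∀ i i', i ≠ i' → Disjoint (R i) (R i')) ∧ univ.biUnion R = S := by
  let e j := ((S.filter (r · = j)).equivFinOfCardEq (hS j)).symm
  have he j i : (e j i : α) ∈ S ∧ r (e j i) = j := mem_filter.mp (e j i).2
  refine ⟨fun i => univ.image fun j => (e j i : α), fun i j => ⟨e j i, ⟨by simp, (he j i).2⟩, ?_⟩,
    fun i i' hii' => ?_, ?_⟩
  · rintro a ⟨ha, rfl⟩
    obtain ⟨j', -, rfl⟩ := mem_image.mp ha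
    rw [(he j' i).2]
  · simp only [disjoint_left, mem_image, mem_univ, true_and, not_exists]
    rintro a ⟨j, rfl⟩ j' hj'
    have hjj' : j' = j := by rw [← (he j' i').2, hj', (he j i).2]
    subst hjj'
    exact hii' ((e j').injective (Subtype.ext hj').symm)
  · ext a
    simp only [mem_biUnion, mem_univ, true_and, mem_image]
    refine ⟨fun ⟨i, j, hj⟩ => hj ▸ (he j i).1, fun ha => ?_⟩
    refine ⟨(e (r a)).symm ⟨a, mem_filter.mpr ⟨ha, rfl⟩⟩, r a, ?_⟩
    rw [Equiv.apply_symm_apply]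

theorem Setoid.exists_zmod_labelling {α : Type*} (s : Setoid α) {K : Finset α}
    (hK : K.Nonempty) : ∃ (k : ℕ) (_ : NeZero k) (u : α → ZMod k),
      (∀ a ∈ K, ∀ b ∈ K, u a = u b ↔ s a b) ∧ ∀ i, ∃ a ∈ K, u a = i := by
  classical
  let Q := K.image (Quotient.mk s)
  have : NeZero #Q := ⟨(hK.image _).card_pos.ne'⟩
  let e : Q ≃ ZMod #Q := Fintype.equivOfCardEq (by simp [ZMod.card])
  have hQ a (ha : a ∈ K) : Quotient.mk s a ∈ Q := mem_image_of_mem _ ha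
  refine ⟨#Q, this, fun a => if h : Quotient.mk s a ∈ Q then e ⟨_, h⟩ else 0,
    fun a ha b hb => ?_, fun i => ?_⟩
  · simp only [hQ a ha, hQ b hb, dif_pos, e.apply_eq_iff_eq, Subtype.mk.injEq, Quotient.eq]
  · obtain ⟨a, ha, hai⟩ := mem_image.mp (e.symm i).2
    refine ⟨a, ha, ?_⟩
    simp only [hai, (e.symm i).2, dif_pos, Subtype.coe_eta, Equiv.apply_symm_apply]

section DoubleCoset

variable {G : Type*} [Group G] {H : Subgroup G} {x g g' y : G}

theorem mem_doubleCoset_iff : g ∈ doubleCoset H x ↔ ∃ a ∈ H, ∃ c ∈ H, g = a * x * c :=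
  DoubleCoset.mem_doubleCoset

theorem self_mem_doubleCoset : x ∈ doubleCoset H x :=
  DoubleCoset.mem_doubleCoset_self H H x

theorem doubleCoset_eq_of_mem (hg : g ∈ doubleCoset H x) : doubleCoset H g = doubleCoset H x :=
  DoubleCoset.doubleCoset_eq_of_mem hg

theorem mem_doubleCoset_of_mul_inv_mem (hg : g ∈ doubleCoset H x) (hy : y * g⁻¹ ∈ H) :
    y ∈ doubleCoset H x := by
  obtain ⟨a, ha, c, hc, rfl⟩ := mem_doubleCoset_iff.mp hg
  exact mem_doubleCoset_iff.mpr ⟨y * (a * x * c)⁻¹ * a, H.mul_mem hy ha, c, hc, by group⟩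

theorem inv_mem_doubleCoset (h : doubleCoset H x = doubleCoset H x⁻¹) (hg : g ∈ doubleCoset H x) :
    g⁻¹ ∈ doubleCoset H x := by
  obtain ⟨a, ha, c, hc, rfl⟩ := mem_doubleCoset_iff.mp hg
  rw [h]
  exact mem_doubleCoset_iff.mpr ⟨c⁻¹, H.inv_mem hc, a⁻¹, H.inv_mem ha, by group⟩

-- Writing `g = a τ c`, the conjugate `c⁻¹ τ c` lies in `H g`.
theorem exists_inv_eq_self_mul_inv_mem {τ : G} (hτ : τ ∈ doubleCoset H x) (hτinv : τ⁻¹ = τ)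
    (hg : g ∈ doubleCoset H x) : ∃ y ∈ doubleCoset H x, y⁻¹ = y ∧ y * g⁻¹ ∈ H := by
  rw [← doubleCoset_eq_of_mem hτ] at hg ⊢
  obtain ⟨a, ha, c, hc, rfl⟩ := mem_doubleCoset_iff.mp hg
  refine ⟨c⁻¹ * τ * c, mem_doubleCoset_iff.mpr ⟨c⁻¹, H.inv_mem hc, c, hc, rfl⟩, ?_, ?_⟩
  · conv_rhs => rw [← hτinv]
    group
  · have : c⁻¹ * τ * c * (a * τ * c)⁻¹ = c⁻¹ * (τ * τ⁻¹) * a⁻¹ := by group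
    rw [this, mul_inv_cancel, mul_one]
    exact H.mul_mem (H.inv_mem hc) (H.inv_mem ha)

variable [Fintype G] [DecidablePred (· ∈ H)]

theorem card_filter_mul_inv_mem (g : G) : #{y | y * g⁻¹ ∈ H} = Nat.card H := by
  rw [Nat.card_eq_fintype_card, Fintype.card_subtype]
  exact card_equiv (Equiv.mulRight g⁻¹) fun y => by simp

theorem card_filter_mul_inv_mem_and_inv_mul_inv_mem (hg : g ∈ doubleCoset H x)
    (hg' : g' ∈ doubleCoset H x) :
    #{y | y * g⁻¹ ∈ H ∧ y⁻¹ * g'⁻¹ ∈ H} = #{y | y * x⁻¹ ∈ H ∧ y⁻¹ * x⁻¹ ∈ H} := by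
  obtain ⟨a, ha, c, hc, rfl⟩ := mem_doubleCoset_iff.mp hg
  obtain ⟨a', ha', c', hc', rfl⟩ := mem_doubleCoset_iff.mp hg'
  refine card_equiv ((Equiv.mulLeft c').trans (Equiv.mulRight c⁻¹)) fun y => ?_
  have e1 : c' * y * c⁻¹ * x⁻¹ = c' * (y * (a * x * c)⁻¹) * a := by group
  have e2 : (c' * y * c⁻¹)⁻¹ * x⁻¹ = c * (y⁻¹ * (a' * x * c')⁻¹) * a' := by group
  simp only [mem_filter, mem_univ, true_and, Equiv.trans_apply, Equiv.coe_mulLeft,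
    Equiv.coe_mulRight, e1, e2, H.mul_mem_cancel_left hc', H.mul_mem_cancel_left hc,
    H.mul_mem_cancel_right ha, H.mul_mem_cancel_right ha']

variable {K : Finset G} {k : ℕ} {u : G → ZMod k}

theorem card_filter_eq_card_of_labelling (hK : ∀ g, g ∈ K ↔ g ∈ doubleCoset H x)
    (hu : ∀ y ∈ doubleCoset H x, ∀ g ∈ doubleCoset H x, u y = u g ↔ y * g⁻¹ ∈ H)
    (hg : g ∈ doubleCoset H x) : #{a ∈ K | u a = u g} = Nat.card H := by
  rw [← card_filter_mul_inv_mem g]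
  congr 1
  ext y
  simp only [mem_filter, mem_univ, true_and, hK]
  refine ⟨fun h => (hu y h.1 g hg).mp h.2, fun h => ?_⟩
  have hy := mem_doubleCoset_of_mul_inv_mem hg h
  exact ⟨hy, (hu y hy g hg).mpr h⟩

theorem card_cell_eq_of_labelling [DecidableEq G] (h : doubleCoset H x = doubleCoset H x⁻¹)
    (hK : ∀ g, g ∈ K ↔ g ∈ doubleCoset H x)
    (hu : ∀ y ∈ doubleCoset H x, ∀ g ∈ doubleCoset H x, u y = u g ↔ y * g⁻¹ ∈ H)
    (hg : g ∈ doubleCoset H x) (hg' : g' ∈ doubleCoset H x) :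
    #(cell K (·⁻¹) u (u g) (u g')) = #{y | y * x⁻¹ ∈ H ∧ y⁻¹ * x⁻¹ ∈ H} := by
  rw [← card_filter_mul_inv_mem_and_inv_mul_inv_mem hg hg']
  congr 1
  ext y
  simp only [mem_cell, mem_filter, mem_univ, true_and, hK]
  refine ⟨fun ⟨hy, hyg, hyg'⟩ =>
    ⟨(hu _ hy _ hg).mp hyg, (hu _ (inv_mem_doubleCoset h hy) _ hg').mp hyg'⟩, fun ⟨hyg, hyg'⟩ => ?_⟩
  have hy := mem_doubleCoset_of_mul_inv_mem hg hyg
  exact ⟨hy, (hu _ hy _ hg).mpr hyg, (hu _ (inv_mem_doubleCoset h hy) _ hg').mpr hyg'⟩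

end DoubleCoset

theorem exists_labelling_invClosed_subset {G : Type*} [Group G] [Fintype G] [DecidableEq G]
    {H : Subgroup G} {x : G} (h1 : doubleCoset H x = doubleCoset H x⁻¹)
    (h2 : Odd ((doubleCoset H x).ncard / Nat.card H) → ∃ t ∈ doubleCoset H x, orderOf t = 2)
    {b : ℕ} (hb : b ≤ Nat.card H) :
    ∃ (k : ℕ) (_ : NeZero k) (u : G → ZMod k) (S : Finset G), (∀ y ∈ S, y ∈ doubleCoset H x) ∧
      (∀ y ∈ S, y⁻¹ ∈ S) ∧ (∀ y ∈ S, ∀ g ∈ doubleCoset H x, u y = u g ↔ y * g⁻¹ ∈ H) ∧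
      ∀ i, #{y ∈ S | u y = i} = b := by
  classical
  let K := (doubleCoset H x).toFinset
  have hK : ∀ g, g ∈ K ↔ g ∈ doubleCoset H x := fun g => Set.mem_toFinset
  obtain ⟨k, _, u, hu, hsurj⟩ :=
    (QuotientGroup.rightRel H).exists_zmod_labelling ⟨x, (hK x).2 self_mem_doubleCoset⟩
  have hu' : ∀ y ∈ doubleCoset H x, ∀ g ∈ doubleCoset H x, u y = u g ↔ y * g⁻¹ ∈ H :=
    fun y hy g hg => by
      rw [eq_comm, hu g ((hK g).2 hg) y ((hK y).2 hy), QuotientGroup.rightRel_apply]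
  have hcell : ∀ i j, #(cell K (·⁻¹) u i j) = #{y | y * x⁻¹ ∈ H ∧ y⁻¹ * x⁻¹ ∈ H} := by
    intro i j
    obtain ⟨g, hg, rfl⟩ := hsurj i
    obtain ⟨g', hg', rfl⟩ := hsurj j
    exact card_cell_eq_of_labelling h1 hK hu' ((hK g).1 hg) ((hK g').1 hg')
  have hH : Nat.card H = k * #{y | y * x⁻¹ ∈ H ∧ y⁻¹ * x⁻¹ ∈ H} := by
    rw [← card_filter_eq_card_of_labelling hK hu' self_mem_doubleCoset, card_filter_eq_mul hcell]
  have hdiag : (∃ a ∈ K, a⁻¹ = a) → ∀ i, ∃ a ∈ cell K (·⁻¹) u i i, a⁻¹ = a := by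
    rintro ⟨τ, hτ, hτinv⟩ i
    obtain ⟨g, hg, rfl⟩ := hsurj i
    obtain ⟨y, hy, hyinv, hyg⟩ := exists_inv_eq_self_mul_inv_mem ((hK τ).1 hτ) hτinv ((hK g).1 hg)
    have hyu : u y = u g := (hu' y hy g ((hK g).1 hg)).mpr hyg
    exact ⟨y, mem_cell.mpr ⟨(hK y).2 hy, hyu, hyinv.symm ▸ hyu⟩, hyinv⟩
  have hk : (∀ a ∈ K, a⁻¹ ≠ a) → Even k := by
    intro hfix
    have hindex : (doubleCoset H x).ncard / Nat.card H = k := by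
      rw [Set.ncard_eq_toFinset_card', card_eq_sum_card_fiberwise (fun a _ => mem_univ (u a)),
        sum_congr rfl fun i _ => card_filter_eq_mul hcell i, sum_const, card_univ, ZMod.card,
        smul_eq_mul, ← hH, Nat.mul_div_cancel _ Nat.card_pos]
    refine Nat.not_odd_iff_even.mp fun hodd => ?_
    obtain ⟨t, ht, hord⟩ := h2 (hindex ▸ hodd)
    exact hfix t ((hK t).2 ht)
      (inv_eq_of_mul_eq_one_right (by rw [← sq, ← hord, pow_orderOf_eq_one]))
  obtain ⟨S, hSK, hSinv, hSrow⟩ := exists_invClosed_subset_card_filter_eq inv_involutive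
    (fun a ha => (hK _).2 (inv_mem_doubleCoset h1 ((hK a).1 ha))) hcell hdiag hk (hH ▸ hb)
  exact ⟨k, inferInstance, u, S, fun y hy => (hK y).1 (hSK hy), hSinv,
    fun y hy => hu' y ((hK y).1 (hSK hy)), hSrow⟩

theorem statement_19_general {G : Type*} [Group G] [Fintype G] (H : Subgroup G) (x : G)
    (h1 : doubleCoset H x = doubleCoset H x⁻¹)
    (h2 : Odd ((doubleCoset H x).ncard / Nat.card H) →
      ∃ t ∈ doubleCoset H x, orderOf t = 2) :
    ∀ b : ℕ, b ≤ Nat.card H →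
      ∃ R : Fin b → Set G,
        (∀ i, IsRightTransversalIn H (doubleCoset H x) (R i)) ∧
        (∀ i j, i ≠ j → Disjoint (R i) (R j)) ∧
        (⋃ i, R i) = (⋃ i, R i)⁻¹ := by
  intro b hb
  classical
  obtain ⟨k, _, u, S, hSD, hSinv, hSu, hSrow⟩ := exists_labelling_invClosed_subset h1 h2 hb
  obtain ⟨R, hRsec, hRdisj, hRS⟩ := S.exists_disjoint_sections u hSrow
  have hRS' : ∀ i, R i ⊆ S := fun i => hRS ▸ subset_biUnion_of_mem R (mem_univ i)
  refine ⟨fun i => R i, fun i => ⟨fun y hy => hSD y (hRS' i hy), fun g hg => ?_⟩,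
    fun i j hij => disjoint_coe.mpr (hRdisj i j hij), ?_⟩
  · obtain ⟨t, ⟨ht, htg⟩, huniq⟩ := hRsec i (u g)
    exact ⟨t, ⟨ht, (hSu t (hRS' i ht) g hg).mp htg⟩,
      fun t' ⟨ht', ht'g⟩ => huniq t' ⟨ht', (hSu t' (hRS' i ht') g hg).mpr ht'g⟩⟩
  · have hU : ⋃ i, (R i : Set G) = S := by rw [← hRS, coe_biUnion]; simp
    rw [hU]
    ext y
    exact ⟨fun hy => by simpa using hSinv y hy, fun hy => by simpa using hSinv _ hy⟩

theorem statement_19 {G : Type*} [Group G] [Fintype G] (p : ℕ) (hp : p.Prime)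
    (hG : Nat.card G = 4 * p) (H : Subgroup G) (hH : H ≠ ⊥) (x : G) (hx : x ∉ H)
    (h1 : doubleCoset H x = doubleCoset H x⁻¹)
    (h2 : Odd ((doubleCoset H x).ncard / Nat.card H) →
      ∃ t ∈ doubleCoset H x, orderOf t = 2) :
    ∀ b : ℕ, b ≤ Nat.card H →
      ∃ R : Fin b → Set G,
        (∀ i, IsRightTransversalIn H (doubleCoset H x) (R i)) ∧
        (∀ i j, i ≠ j → Disjoint (R i) (R j)) ∧
        (⋃ i, R i) = (⋃ i, R i)⁻¹ :=
  statement_19_general H x h1 h2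
end
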